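/- Let n ≥ 1, θ ∈ ℝ, and for φ ∈ ℝ let R_y(φ) denote the 2×2 real rotation matrix [[cos(φ/2), −sin(φ/2)], [sin(φ/2), cos(φ/2)]]. Then the Kronecker product R_y(2·2¹θ) ⊗ R_y(2·2²θ) ⊗ ⋯ ⊗ R_y(2·2ⁿθ), applied to the first standard basis vector e₀ ∈ ℝ^{2ⁿ}, yields the vector whose i-th entry (0 ≤ i ≤ 2ⁿ − 1) equals ∏_{j=1}^n cos(2^j θ)^{1−b_{ij}} · sin(2^j θ)^{b_{ij}}, where b_{i1}b_{i2}…b_{in} is the n-bit binary representation of i (b_{i1} the most significant bit); that is, the sampling circuit S(θ) = ⊗_{j=1}^n R_y(2·2^j θ) applied to the all-zeros state produces the vector x(θ) for N = 2ⁿ. -/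

import Mathlib

open Real Finset Matrix

/-- The 2×2 real rotation matrix
`R_y(φ) = [[cos(φ/2), −sin(φ/2)], [sin(φ/2), cos(φ/2)]]`. -/
noncomputable def Ry (φ : ℝ) : Matrix (Fin 2) (Fin 2) ℝ :=
  !![Real.cos (φ / 2), -Real.sin (φ / 2); Real.sin (φ / 2), Real.cos (φ / 2)]

/-- The `n`-fold Kronecker product `M 1 ⊗ M 2 ⊗ ⋯ ⊗ M n` of 2×2 matrices, as a matrix on
`Fin (2^n)`, using the big-endian index identification `Fin 2 × Fin (2^n) ≃ Fin (2^(n+1))`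
(the factor `M 1` corresponds to the most significant bit of the index). -/
noncomputable def kronFold : (n : ℕ) → (ℕ → Matrix (Fin 2) (Fin 2) ℝ) →
    Matrix (Fin (2 ^ n)) (Fin (2 ^ n)) ℝ
  | 0, _ => 1
  | n + 1, M =>
    Matrix.reindex (finProdFinEquiv.trans (finCongr (by ring)))
        (finProdFinEquiv.trans (finCongr (by ring)))
      (Matrix.kroneckerMap (· * ·) (M 1) (kronFold n (fun j => M (j + 1))))

/-! An entry of a Kronecker product is the product of the factors' entries at the binary digits
of the row and column indices. Against `e₀` every column digit is `0`, and the first column of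
`R_y(2·2ʲθ)` is `(cos 2ʲθ, sin 2ʲθ)`. -/

theorem Finset.prod_Icc_one_succ {M : Type*} [CommMonoid M] (n : ℕ) (f : ℕ → M) :
    ∏ j ∈ Icc 1 (n + 1), f j = f 1 * ∏ j ∈ Icc 1 n, f (j + 1) := by
  rw [← mul_prod_Ioc_eq_prod_Icc (by omega), ← Icc_add_one_left_eq_Ioc, ← map_add_right_Icc,
    prod_map]
  rfl

/-- The `k`-th binary digit of `i`, counted from the least significant one. -/
def binDigit (k i : ℕ) : Fin 2 := ⟨i / 2 ^ k % 2, Nat.mod_lt _ two_pos⟩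

@[simp] lemma binDigit_zero (k : ℕ) : binDigit k 0 = 0 := by
  simp [binDigit]

lemma binDigit_mod_two_pow {k n : ℕ} (h : k < n) (i : ℕ) :
    binDigit k (i % 2 ^ n) = binDigit k i := by
  have hsplit : 2 ^ n = 2 ^ k * 2 ^ (n - k) := by rw [← pow_add]; congr 1; omega
  ext
  simp only [binDigit, hsplit, Nat.mod_mul_right_div_self]
  exact Nat.mod_mod_of_dvd _ (dvd_pow_self 2 (by omega))

lemma binDigit_eq_div {n i : ℕ} (h : i < 2 ^ (n + 1)) : (binDigit n i : ℕ) = i / 2 ^ n := by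
  refine Nat.mod_eq_of_lt (Nat.div_lt_of_lt_mul ?_)
  rwa [← pow_succ]

lemma kronFold_succ_apply (n : ℕ) (M : ℕ → Matrix (Fin 2) (Fin 2) ℝ) (i k : Fin (2 ^ (n + 1))) :
    kronFold (n + 1) M i k = M 1 (binDigit n i) (binDigit n k) *
      kronFold n (fun j => M (j + 1)) ⟨i % 2 ^ n, Nat.mod_lt _ (by positivity)⟩
        ⟨k % 2 ^ n, Nat.mod_lt _ (by positivity)⟩ := by
  simp only [kronFold, reindex_apply, submatrix_apply, kroneckerMap_apply]
  congr 2 <;> ext <;> simp [finProdFinEquiv, binDigit_eq_div, Fin.divNat, Fin.modNat]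

lemma kronFold_apply (n : ℕ) (M : ℕ → Matrix (Fin 2) (Fin 2) ℝ) (i k : Fin (2 ^ n)) :
    kronFold n M i k = ∏ j ∈ Icc 1 n, M j (binDigit (n - j) i) (binDigit (n - j) k) := by
  induction n generalizing M with
  | zero =>
    obtain rfl : i = k := Fin.ext (by have := i.isLt; have := k.isLt; simp at *)
    simp [kronFold]
  | succ n ih =>
    rw [kronFold_succ_apply, ih, prod_Icc_one_succ]
    congr 1
    refine prod_congr rfl fun j hj => ?_
    have hj : n - j < n := by simp only [mem_Icc] at hj; omega
    simp only [Nat.add_sub_add_right, binDigit_mod_two_pow hj]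

lemma kronFold_mulVec_single_zero (n : ℕ) (M : ℕ → Matrix (Fin 2) (Fin 2) ℝ) (i : Fin (2 ^ n)) :
    (kronFold n M *ᵥ Pi.single 0 1) i = ∏ j ∈ Icc 1 n, M j (binDigit (n - j) i) 0 := by
  simp [kronFold_apply]

lemma Ry_apply_zero (φ : ℝ) (b : Fin 2) :
    Ry φ b 0 = if (b : ℕ) = 1 then Real.sin (φ / 2) else Real.cos (φ / 2) := by
  fin_cases b <;> simp [Ry]

theorem stmt_19_general (n : ℕ) (θ : ℝ) (i : Fin (2 ^ n)) :
    (kronFold n (fun j => Ry (2 * 2 ^ j * θ))).mulVec (Pi.single (0 : Fin (2 ^ n)) 1) i =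
      ∏ j ∈ Finset.Icc 1 n,
        if i.val / 2 ^ (n - j) % 2 = 1
        then Real.sin ((2 : ℝ) ^ j * θ)
        else Real.cos ((2 : ℝ) ^ j * θ) := by
  rw [kronFold_mulVec_single_zero]
  refine prod_congr rfl fun j _ => ?_
  rw [Ry_apply_zero, mul_assoc, mul_div_cancel_left₀ _ two_ne_zero]
  rfl

/-- For `n ≥ 1` and `θ ∈ ℝ`, the Kronecker product
`R_y(2·2¹θ) ⊗ R_y(2·2²θ) ⊗ ⋯ ⊗ R_y(2·2ⁿθ)` applied to the first standard basis vector
`e₀ ∈ ℝ^{2ⁿ}` yields the vector whose `i`-th entry equals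
`∏_{j=1}^n cos(2^j θ)^{1−b_{ij}} sin(2^j θ)^{b_{ij}}`, where `b_{i1}…b_{in}` is the `n`-bit
binary representation of `i` (`b_{i1}` most significant); i.e. the sampling circuit
`S(θ) = ⊗_{j=1}^n R_y(2·2^j θ)` applied to the all-zeros state produces `x(θ)` for `N = 2ⁿ`. -/
theorem stmt_19 (n : ℕ) (hn : 1 ≤ n) (θ : ℝ) (i : Fin (2 ^ n)) :
    (kronFold n (fun j => Ry (2 * 2 ^ j * θ))).mulVec (Pi.single (0 : Fin (2 ^ n)) 1) i =
      ∏ j ∈ Finset.Icc 1 n,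
        if i.val / 2 ^ (n - j) % 2 = 1
        then Real.sin ((2 : ℝ) ^ j * θ)
        else Real.cos ((2 : ℝ) ^ j * θ) :=
  stmt_19_general n θ i
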